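/- For a bivariate Gaussian pair (X,Y) with zero means, unit variances and correlation ρ ∈ (0,1), the correlation of X and Y conditioned on |Y| > v tends to 1 as v → ∞, with 1 − ρ_v^s ~ ((1−ρ²)/(2ρ²))·(1/v²). -/

import Mathlib

/-!
Write `X = ρ Y + √(1 - ρ²) Z` with `Z` independent of `Y`. The event `A = {|Y| > v}` depends on
`Y` only, so on `A` the noise `Z` keeps mean `0` and second moment `1`, while `Y` has conditional
mean `0` by symmetry. With `m = E[Y² | A]` the conditional correlation is therefore
`ρ m / √((ρ² m + 1 - ρ²) m)`, so that `1 - corr² = (1 - ρ²) / (ρ² m + 1 - ρ²)`.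
Integrating by parts, `m = 1 + v φ(v) / Ḡ(v)` with `Ḡ` the Gaussian tail, and the Mills-ratio
bounds `v φ(v) / (v² + 1) ≤ Ḡ(v) ≤ φ(v) / v` give `m ~ v²`. Hence `v² (1 - corr²) → (1 - ρ²) / ρ²`,
`corr → 1`, and dividing by `1 + corr → 2` gives the rate.
-/

open MeasureTheory ProbabilityTheory Filter Real Set

/-- Expectation of `f` conditioned on the event `A`. -/
noncomputable def cExp {Ω : Type*} [MeasurableSpace Ω] (μ : Measure Ω) (A : Set Ω)
    (f : Ω → ℝ) : ℝ :=
  (∫ ω in A, f ω ∂μ) / (μ A).toReal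

/-- Variance of `f` conditioned on the event `A`. -/
noncomputable def cVar {Ω : Type*} [MeasurableSpace Ω] (μ : Measure Ω) (A : Set Ω)
    (f : Ω → ℝ) : ℝ :=
  cExp μ A (fun ω => (f ω) ^ 2) - (cExp μ A f) ^ 2

/-- Covariance of `f` and `g` conditioned on the event `A`. -/
noncomputable def cCov {Ω : Type*} [MeasurableSpace Ω] (μ : Measure Ω) (A : Set Ω)
    (f g : Ω → ℝ) : ℝ :=
  cExp μ A (fun ω => f ω * g ω) - cExp μ A f * cExp μ A g

/-- Correlation coefficient of `f` and `g` conditioned on the event `A`. -/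
noncomputable def cCorr {Ω : Type*} [MeasurableSpace Ω] (μ : Measure Ω) (A : Set Ω)
    (f g : Ω → ℝ) : ℝ :=
  cCov μ A f g / Real.sqrt (cVar μ A f * cVar μ A g)

/-- The standard normal cumulative distribution function `Φ`. -/
noncomputable def stdPhi (x : ℝ) : ℝ := ((gaussianReal 0 1) (Set.Iic x)).toReal

/-- The standard normal density `φ`. -/
noncomputable def stdphi (x : ℝ) : ℝ := Real.exp (-x ^ 2 / 2) / Real.sqrt (2 * Real.pi)

open scoped Topology NNReal ENNReal

lemma stdphi_pos (x : ℝ) : 0 < stdphi x := by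
  unfold stdphi
  positivity

lemma stdphi_neg (x : ℝ) : stdphi (-x) = stdphi x := by
  simp [stdphi]

lemma gaussianPDFReal_zero_one : gaussianPDFReal 0 1 = stdphi := by
  ext x
  simp [gaussianPDFReal, stdphi, div_eq_inv_mul]

lemma hasDerivAt_stdphi (x : ℝ) : HasDerivAt stdphi (-(x * stdphi x)) x := by
  have h := ((((hasDerivAt_pow 2 x).neg).div_const 2).exp).div_const (√(2 * π))
  exact h.congr_deriv (by simp only [stdphi, Pi.neg_apply]; ring)

lemma integrable_pow_mul_stdphi (n : ℕ) : Integrable fun x => x ^ n * stdphi x := by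
  have h := (integrable_rpow_mul_exp_neg_mul_sq (b := 1 / 2) (by norm_num)
    (s := n) (by linarith [n.cast_nonneg (α := ℝ)])).div_const (√(2 * π))
  refine h.congr (ae_of_all _ fun x => ?_)
  simp only [stdphi, Real.rpow_natCast]
  ring_nf

lemma integrable_stdphi : Integrable stdphi := by
  simpa using integrable_pow_mul_stdphi 0

lemma tendsto_pow_mul_stdphi_atTop (n : ℕ) :
    Tendsto (fun x => x ^ n * stdphi x) atTop (𝓝 0) := by
  have h : Tendsto (fun x : ℝ => x ^ n * exp (-x)) atTop (𝓝 0) :=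
    tendsto_pow_mul_exp_neg_atTop_nhds_zero n
  refine squeeze_zero' ?_ ?_ (h.div_const (√(2 * π)) |>.trans (by simp))
  · filter_upwards [eventually_ge_atTop 0] with x hx
    exact mul_nonneg (pow_nonneg hx n) (stdphi_pos x).le
  · filter_upwards [eventually_ge_atTop 2] with x hx
    rw [stdphi, ← mul_div_assoc]
    gcongr
    nlinarith

lemma tendsto_stdphi_atTop : Tendsto stdphi atTop (𝓝 0) := by
  simpa using tendsto_pow_mul_stdphi_atTop 0

noncomputable def gaussTail (v : ℝ) : ℝ := ∫ x in Ioi v, stdphi x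

lemma integral_Ioi_mul_stdphi (v : ℝ) : ∫ x in Ioi v, x * stdphi x = stdphi v := by
  have h := integral_Ioi_of_hasDerivAt_of_tendsto' (f := fun x => -stdphi x)
    (f' := fun x => x * stdphi x) (a := v) (m := 0)
    (fun x _ => (hasDerivAt_stdphi x).neg.congr_deriv (neg_neg _))
    (by simpa using (integrable_pow_mul_stdphi 1).integrableOn)
    (by simpa using tendsto_stdphi_atTop.neg)
  simpa using h

lemma integral_Ioi_sq_mul_stdphi (v : ℝ) :
    ∫ x in Ioi v, x ^ 2 * stdphi x = v * stdphi v + gaussTail v := by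
  have h := integral_Ioi_of_hasDerivAt_of_tendsto' (f := fun x => -(x * stdphi x))
    (f' := fun x => x ^ 2 * stdphi x - stdphi x) (a := v) (m := 0)
    (fun x _ => ((hasDerivAt_id' x).mul (hasDerivAt_stdphi x)).neg.congr_deriv (by ring))
    ((integrable_pow_mul_stdphi 2).sub integrable_stdphi).integrableOn
    (by simpa using (tendsto_pow_mul_stdphi_atTop 1).neg)
  rw [integral_sub (integrable_pow_mul_stdphi 2).integrableOn integrable_stdphi.integrableOn] at h
  rw [gaussTail]
  linarith

lemma gaussTail_le_stdphi_div {v : ℝ} (hv : 0 < v) : gaussTail v ≤ stdphi v / v := by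
  calc gaussTail v ≤ ∫ x in Ioi v, x * stdphi x / v := by
        refine setIntegral_mono_on integrable_stdphi.integrableOn
          (by simpa using ((integrable_pow_mul_stdphi 1).div_const v).integrableOn)
          measurableSet_Ioi fun x hx => ?_
        rw [le_div_iff₀ hv]
        nlinarith [stdphi_pos x, mem_Ioi.1 hx]
    _ = stdphi v / v := by rw [integral_div, integral_Ioi_mul_stdphi]

lemma stdphi_div_le_gaussTail {v : ℝ} (hv : 0 < v) :
    stdphi v / v ≤ (1 + (v ^ 2)⁻¹) * gaussTail v := by
  have hderiv (x : ℝ) (hx : x ∈ Ici v) :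
      HasDerivAt (fun x => -(stdphi x / x)) ((1 + (x ^ 2)⁻¹) * stdphi x) x := by
    have hx0 : x ≠ 0 := (hv.trans_le hx).ne'
    exact ((hasDerivAt_stdphi x).div (hasDerivAt_id' x) hx0).neg.congr_deriv (by field_simp; ring)
  have hint : ∫ x in Ioi v, (1 + (x ^ 2)⁻¹) * stdphi x = stdphi v / v := by
    have h := integral_Ioi_of_hasDerivAt_of_nonneg' (l := 0) hderiv
      (fun x _ => mul_nonneg (by positivity) (stdphi_pos x).le)
      (by simpa [div_eq_mul_inv] using (tendsto_stdphi_atTop.mul tendsto_inv_atTop_zero).neg)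
    simpa using h
  rw [← hint, gaussTail, ← integral_const_mul]
  refine integral_mono_of_nonneg
    (ae_of_all _ fun x => mul_nonneg (by positivity) (stdphi_pos x).le)
    (integrable_stdphi.integrableOn.const_mul _) ?_
  refine ae_restrict_of_forall_mem measurableSet_Ioi fun x hx => ?_
  have hvx : v ^ 2 ≤ x ^ 2 := pow_le_pow_left₀ hv.le (le_of_lt hx) 2
  exact mul_le_mul_of_nonneg_right (by gcongr) (stdphi_pos x).le

lemma tendsto_mul_gaussTail_div_stdphi :
    Tendsto (fun v => v * gaussTail v / stdphi v) atTop (𝓝 1) := by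
  have hlow : Tendsto (fun v : ℝ => (1 + (v ^ 2)⁻¹)⁻¹) atTop (𝓝 1) := by
    simpa using (tendsto_const_nhds.add (tendsto_inv_atTop_zero.comp
      (tendsto_pow_atTop two_ne_zero))).inv₀ (by norm_num : (1 + 0 : ℝ) ≠ 0)
  refine tendsto_of_tendsto_of_tendsto_of_le_of_le' hlow tendsto_const_nhds ?_ ?_
  · filter_upwards [eventually_gt_atTop 0] with v hv
    have h := (div_le_iff₀ hv).1 (stdphi_div_le_gaussTail hv)
    rw [le_div_iff₀ (stdphi_pos v), inv_mul_le_iff₀ (by positivity)]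
    linarith
  · filter_upwards [eventually_gt_atTop 0] with v hv
    rw [div_le_one (stdphi_pos v), mul_comm]
    exact (le_div_iff₀ hv).1 (gaussTail_le_stdphi_div hv)

lemma setIntegral_gaussianReal_zero_one {s : Set ℝ} (hs : MeasurableSet s) (g : ℝ → ℝ) :
    ∫ x in s, g x ∂gaussianReal 0 1 = ∫ x in s, stdphi x * g x := by
  rw [← integral_indicator hs, integral_gaussianReal_eq_integral_smul one_ne_zero,
    ← integral_indicator hs, gaussianPDFReal_zero_one]
  congr 1 with x
  by_cases hx : x ∈ s <;> simp [hx]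

lemma setIntegral_pow_gaussianReal_abs_gt (n : ℕ) {v : ℝ} (hv : 0 ≤ v) :
    ∫ y in {y : ℝ | |y| > v}, y ^ n ∂gaussianReal 0 1
      = (1 + (-1) ^ n) * ∫ x in Ioi v, x ^ n * stdphi x := by
  have hsplit : {y : ℝ | |y| > v} = Iio (-v) ∪ Ioi v := by
    ext y
    simp only [mem_union, mem_Iio, mem_Ioi, gt_iff_lt, lt_abs]
    constructor <;> rintro (h | h) <;> first | (right; linarith) | (left; linarith)
  have hint : Integrable fun x => stdphi x * x ^ n := by
    simpa only [mul_comm] using integrable_pow_mul_stdphi n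
  have hneg :
      ∫ x in Ioi v, stdphi (-x) * (-x) ^ n = (-1) ^ n * ∫ x in Ioi v, x ^ n * stdphi x := by
    rw [← integral_const_mul]
    congr 1 with x
    rw [stdphi_neg, neg_pow]
    ring
  rw [setIntegral_gaussianReal_zero_one (hsplit ▸ measurableSet_Iio.union measurableSet_Ioi),
    hsplit, setIntegral_union (Ioi_disjoint_Iio_of_le (by linarith)).symm measurableSet_Ioi
      hint.integrableOn hint.integrableOn, ← integral_Iic_eq_integral_Iio,
    ← integral_comp_neg_Ioi, hneg]
  simp_rw [mul_comm (stdphi _)]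
  ring

lemma gaussTail_pos {v : ℝ} (hv : 0 < v) : 0 < gaussTail v :=
  pos_of_mul_pos_right ((div_pos (stdphi_pos v) hv).trans_le (stdphi_div_le_gaussTail hv))
    (by positivity)

lemma measureReal_gaussianReal_abs_gt {v : ℝ} (hv : 0 ≤ v) :
    (gaussianReal 0 1).real {y : ℝ | |y| > v} = 2 * gaussTail v := by
  have h := setIntegral_pow_gaussianReal_abs_gt 0 hv
  simp only [pow_zero, setIntegral_const, smul_eq_mul, mul_one, one_mul] at h
  rw [h, gaussTail]
  norm_num

lemma cExp_gaussianReal_sq_abs_gt {v : ℝ} (hv : 0 < v) :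
    cExp (gaussianReal 0 1) {y | |y| > v} (fun y => y ^ 2) = 1 + v * stdphi v / gaussTail v := by
  have hG := gaussTail_pos hv
  rw [cExp, ← measureReal_def, measureReal_gaussianReal_abs_gt hv.le,
    setIntegral_pow_gaussianReal_abs_gt 2 hv.le, integral_Ioi_sq_mul_stdphi]
  field_simp
  ring

lemma tendsto_cExp_gaussianReal_sq_abs_gt_div_sq :
    Tendsto (fun v => cExp (gaussianReal 0 1) {y | |y| > v} (fun y => y ^ 2) / v ^ 2)
      atTop (𝓝 1) := by
  have h := (tendsto_inv_atTop_zero.comp (tendsto_pow_atTop two_ne_zero)).add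
    (tendsto_mul_gaussTail_div_stdphi.inv₀ one_ne_zero)
  rw [zero_add, inv_one] at h
  refine h.congr' ?_
  filter_upwards [eventually_gt_atTop 0] with v hv
  have hG := gaussTail_pos hv
  have hφ := stdphi_pos v
  rw [cExp_gaussianReal_sq_abs_gt hv, Function.comp_apply]
  field_simp

lemma integral_sq_gaussianReal_zero_one : ∫ x, x ^ 2 ∂gaussianReal 0 1 = 1 := by
  have h := variance_eq_sub (memLp_id_gaussianReal (μ := 0) (v := 1) 2)
  simp only [variance_id_gaussianReal] at h
  simpa [Pi.pow_apply] using h.symm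

lemma memLp_of_hasLaw_gaussianReal {Ω : Type*} [MeasurableSpace Ω] {P : Measure Ω} {Y : Ω → ℝ}
    {m : ℝ} {v : ℝ≥0} (hY : HasLaw Y (gaussianReal m v) P) {p : ℝ≥0∞} (hp : p ≠ ∞) :
    MemLp Y p P :=
  (memLp_map_measure_iff (g := id) (hY.map_eq ▸ aestronglyMeasurable_id) hY.aemeasurable).1
    (hY.map_eq ▸ memLp_id_gaussianReal' p hp)

section ConditionalExpectation

variable {Ω : Type*} [MeasurableSpace Ω] {μ : Measure Ω} {A : Set Ω}

lemma cExp_add {f g : Ω → ℝ} (hf : IntegrableOn f A μ) (hg : IntegrableOn g A μ) :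
    cExp μ A (fun ω => f ω + g ω) = cExp μ A f + cExp μ A g := by
  simp only [cExp, integral_add hf hg, add_div]

lemma cExp_const_mul (c : ℝ) (f : Ω → ℝ) : cExp μ A (fun ω => c * f ω) = c * cExp μ A f := by
  simp only [cExp, integral_const_mul, mul_div_assoc]

lemma cExp_const [IsFiniteMeasure μ] (hA : μ A ≠ 0) (c : ℝ) : cExp μ A (fun _ => c) = c := by
  rw [cExp, setIntegral_const, smul_eq_mul, measureReal_def,
    mul_div_cancel_left₀ _ (ENNReal.toReal_ne_zero.2 ⟨hA, measure_ne_top μ A⟩)]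

lemma cExp_comp_of_hasLaw {β : Type*} [MeasurableSpace β] {Y : Ω → β} {ν : Measure β}
    (hY : HasLaw Y ν μ) {S : Set β} (hS : MeasurableSet S) {g : β → ℝ}
    (hg : AEStronglyMeasurable g ν) :
    cExp μ (Y ⁻¹' S) (fun ω => g (Y ω)) = cExp ν S g := by
  rw [cExp, cExp, ← hY.map_eq, Measure.map_apply_of_aemeasurable hY.aemeasurable hS,
    setIntegral_map hS (hY.map_eq ▸ hg) hY.aemeasurable]

lemma cExp_preimage_mul_of_indepFun {β γ : Type*} [MeasurableSpace β] [MeasurableSpace γ]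
    {Y : Ω → β} {Z : Ω → γ} (hind : IndepFun Y Z μ) (hY : Measurable Y) (hZ : Measurable Z)
    {S : Set β} (hS : MeasurableSet S) {g : β → ℝ} {h : γ → ℝ} (hg : Measurable g)
    (hh : Measurable h) :
    cExp μ (Y ⁻¹' S) (fun ω => g (Y ω) * h (Z ω))
      = cExp μ (Y ⁻¹' S) (fun ω => g (Y ω)) * ∫ ω, h (Z ω) ∂μ := by
  have hgS : Measurable (S.indicator g) := hg.indicator hS
  have key : ∫ ω in Y ⁻¹' S, g (Y ω) * h (Z ω) ∂μ
      = (∫ ω in Y ⁻¹' S, g (Y ω) ∂μ) * ∫ ω, h (Z ω) ∂μ := by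
    rw [← integral_indicator (hY hS), ← integral_indicator (hY hS)]
    have hfac : (Y ⁻¹' S).indicator (fun ω => g (Y ω) * h (Z ω))
        = fun ω => S.indicator g (Y ω) * h (Z ω) := by
      ext ω
      by_cases hω : Y ω ∈ S <;> simp [hω]
    rw [hfac]
    exact (hind.comp hgS hh).integral_fun_mul_eq_mul_integral
      (hgS.comp hY).aestronglyMeasurable (hh.comp hZ).aestronglyMeasurable
  rw [cExp, cExp, key, mul_div_right_comm]

lemma cExp_preimage_of_indepFun [IsFiniteMeasure μ] {β γ : Type*} [MeasurableSpace β]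
    [MeasurableSpace γ] {Y : Ω → β} {Z : Ω → γ} (hind : IndepFun Y Z μ) (hY : Measurable Y)
    (hZ : Measurable Z) {S : Set β} (hS : MeasurableSet S) (hA : μ (Y ⁻¹' S) ≠ 0) {h : γ → ℝ}
    (hh : Measurable h) :
    cExp μ (Y ⁻¹' S) (fun ω => h (Z ω)) = ∫ ω, h (Z ω) ∂μ := by
  simpa [cExp_const hA] using
    cExp_preimage_mul_of_indepFun hind hY hZ hS (measurable_const (a := (1 : ℝ))) hh

end ConditionalExpectation

noncomputable def mixtureCorr (a b m : ℝ) : ℝ := a * m / √((a ^ 2 * m + b ^ 2) * m)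

lemma cCorr_add_of_indepFun {Ω : Type*} [MeasurableSpace Ω] {μ : Measure Ω}
    [IsFiniteMeasure μ] {Y Z : Ω → ℝ} (hind : IndepFun Y Z μ) (hY : Measurable Y)
    (hZ : Measurable Z) (hYL2 : MemLp Y 2 μ) (hZL2 : MemLp Z 2 μ) (hZmean : ∫ ω, Z ω ∂μ = 0)
    (hZsq : ∫ ω, Z ω ^ 2 ∂μ = 1) {S : Set ℝ} (hS : MeasurableSet S) (hA : μ (Y ⁻¹' S) ≠ 0)
    (hYmean : cExp μ (Y ⁻¹' S) Y = 0) (a b : ℝ) :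
    cCorr μ (Y ⁻¹' S) (fun ω => a * Y ω + b * Z ω) Y
      = mixtureCorr a b (cExp μ (Y ⁻¹' S) fun ω => Y ω ^ 2) := by
  simp only [cCorr, cCov, cVar, mixtureCorr]
  set A := Y ⁻¹' S
  set m := cExp μ A fun ω => Y ω ^ 2
  have hYi : IntegrableOn Y A μ := (hYL2.integrable one_le_two).integrableOn
  have hZi : IntegrableOn Z A μ := (hZL2.integrable one_le_two).integrableOn
  have hY2i : IntegrableOn (fun ω => Y ω ^ 2) A μ := hYL2.integrable_sq.integrableOn
  have hZ2i : IntegrableOn (fun ω => Z ω ^ 2) A μ := hZL2.integrable_sq.integrableOn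
  have hYZi : IntegrableOn (fun ω => Y ω * Z ω) A μ :=
    (hind.integrable_mul (hYL2.integrable one_le_two) (hZL2.integrable one_le_two)).integrableOn
  have eZ : cExp μ A Z = 0 :=
    (cExp_preimage_of_indepFun hind hY hZ hS hA measurable_id).trans hZmean
  have eZ2 : cExp μ A (fun ω => Z ω ^ 2) = 1 :=
    (cExp_preimage_of_indepFun hind hY hZ hS hA (h := fun z => z ^ 2) (by fun_prop)).trans hZsq
  have eYZ : cExp μ A (fun ω => Y ω * Z ω) = 0 := by
    simpa [hZmean] using
      cExp_preimage_mul_of_indepFun hind hY hZ hS (g := id) (h := id) measurable_id measurable_id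
  have eX : cExp μ A (fun ω => a * Y ω + b * Z ω) = 0 := by
    rw [cExp_add (hYi.const_mul a) (hZi.const_mul b), cExp_const_mul, cExp_const_mul, hYmean, eZ]
    ring
  have eXY : cExp μ A (fun ω => (a * Y ω + b * Z ω) * Y ω) = a * m := by
    rw [show (fun ω => (a * Y ω + b * Z ω) * Y ω) = fun ω => a * Y ω ^ 2 + b * (Y ω * Z ω) by
      ext ω; ring, cExp_add (hY2i.const_mul a) (hYZi.const_mul b), cExp_const_mul,
      cExp_const_mul, eYZ]
    ring
  have hrest : IntegrableOn (fun ω => 2 * a * b * (Y ω * Z ω) + b ^ 2 * Z ω ^ 2) A μ :=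
    (hYZi.const_mul _).add (hZ2i.const_mul _)
  have eX2 : cExp μ A (fun ω => (a * Y ω + b * Z ω) ^ 2) = a ^ 2 * m + b ^ 2 := by
    rw [show (fun ω => (a * Y ω + b * Z ω) ^ 2)
        = fun ω => a ^ 2 * Y ω ^ 2 + (2 * a * b * (Y ω * Z ω) + b ^ 2 * Z ω ^ 2) by ext ω; ring,
      cExp_add (hY2i.const_mul _) hrest,
      cExp_add (hYZi.const_mul _) (hZ2i.const_mul _), cExp_const_mul, cExp_const_mul,
      cExp_const_mul, eYZ, eZ2]
    ring
  rw [eX, eXY, eX2, hYmean]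
  ring_nf

lemma mixtureCorr_nonneg {a b m : ℝ} (ha : 0 ≤ a) (hm : 0 ≤ m) : 0 ≤ mixtureCorr a b m := by
  unfold mixtureCorr
  positivity

lemma one_sub_mixtureCorr_sq {a m : ℝ} (b : ℝ) (ha : a ≠ 0) (hm : 0 < m) :
    1 - mixtureCorr a b m ^ 2 = b ^ 2 / (a ^ 2 * m + b ^ 2) := by
  have hD : 0 < a ^ 2 * m + b ^ 2 := by positivity
  rw [mixtureCorr, div_pow, sq_sqrt (by positivity)]
  field_simp
  ring

lemma tendsto_mixtureCorr {a b : ℝ} (ha : 0 < a) {m : ℝ → ℝ}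
    (hm : Tendsto (fun v => m v / v ^ 2) atTop (𝓝 1)) :
    Tendsto (fun v => mixtureCorr a b (m v)) atTop (𝓝 1) ∧
      Tendsto (fun v => v ^ 2 * (1 - mixtureCorr a b (m v))) atTop (𝓝 (b ^ 2 / (2 * a ^ 2))) := by
  set r := fun v => mixtureCorr a b (m v)
  have hinv : Tendsto (fun v : ℝ => (v ^ 2)⁻¹) atTop (𝓝 0) :=
    tendsto_inv_atTop_zero.comp (tendsto_pow_atTop two_ne_zero)
  have hpos : ∀ᶠ v in atTop, 0 < v ∧ 0 < m v := by
    filter_upwards [hm.eventually (lt_mem_nhds one_pos), eventually_gt_atTop 0] with v h1 hv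
    exact ⟨hv, (div_pos_iff_of_pos_right (pow_pos hv 2)).1 h1⟩
  have hq : Tendsto (fun v => v ^ 2 * (1 - r v ^ 2)) atTop (𝓝 (b ^ 2 / a ^ 2)) := by
    have h := (tendsto_const_nhds (x := b ^ 2)).div
      ((hm.const_mul (a ^ 2)).add (hinv.const_mul (b ^ 2))) (by positivity)
    rw [mul_one, mul_zero, add_zero] at h
    refine h.congr' ?_
    filter_upwards [hpos] with v ⟨hv, hmv⟩
    rw [Pi.div_apply, one_sub_mixtureCorr_sq b ha.ne' hmv]
    field_simp
  have hr2 : Tendsto (fun v => r v ^ 2) atTop (𝓝 1) := by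
    have h := (tendsto_const_nhds (x := (1 : ℝ))).sub (hq.mul hinv)
    rw [mul_zero, sub_zero] at h
    refine h.congr' ?_
    filter_upwards [hpos] with v ⟨hv, _⟩
    field_simp
    ring
  have hr : Tendsto r atTop (𝓝 1) := by
    refine (sqrt_one ▸ hr2.sqrt).congr' ?_
    filter_upwards [hpos] with v ⟨_, hmv⟩
    exact sqrt_sq (mixtureCorr_nonneg ha.le hmv.le)
  refine ⟨hr, ?_⟩
  have h := hq.div (tendsto_const_nhds.add hr) (by norm_num : (1 : ℝ) + 1 ≠ 0)
  rw [show b ^ 2 / a ^ 2 / (1 + 1) = b ^ 2 / (2 * a ^ 2) by ring] at h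
  refine h.congr' ?_
  filter_upwards [hpos] with v ⟨_, hmv⟩
  have hr0 : 0 ≤ r v := mixtureCorr_nonneg ha.le hmv.le
  rw [Pi.div_apply]
  field_simp
  ring

lemma cCorr_abs_gt_eq_mixtureCorr {Ω : Type*} [MeasurableSpace Ω] {P : Measure Ω}
    [IsProbabilityMeasure P] {Y Z : Ω → ℝ} (hY : Measurable Y) (hZ : Measurable Z)
    (hYlaw : HasLaw Y (gaussianReal 0 1) P) (hZlaw : HasLaw Z (gaussianReal 0 1) P)
    (hind : IndepFun Y Z P) (a b : ℝ) {v : ℝ} (hv : 0 < v) :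
    cCorr P {ω | |Y ω| > v} (fun ω => a * Y ω + b * Z ω) Y
      = mixtureCorr a b (cExp (gaussianReal 0 1) {y | |y| > v} fun y => y ^ 2) := by
  have hS : MeasurableSet {y : ℝ | |y| > v} := measurableSet_lt measurable_const measurable_abs
  have hA : P (Y ⁻¹' {y | |y| > v}) ≠ 0 := by
    rw [← Measure.map_apply hY hS, hYlaw.map_eq, ← measureReal_ne_zero_iff,
      measureReal_gaussianReal_abs_gt hv.le]
    exact (mul_pos two_pos (gaussTail_pos hv)).ne'
  have hYmean : cExp P (Y ⁻¹' {y | |y| > v}) Y = 0 := by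
    have hodd : ∫ y in {y : ℝ | |y| > v}, y ∂gaussianReal 0 1 = 0 := by
      simpa using setIntegral_pow_gaussianReal_abs_gt 1 hv.le
    rw [cExp_comp_of_hasLaw hYlaw hS (g := fun y => y) aestronglyMeasurable_id, cExp, hodd,
      zero_div]
  have hZsq : ∫ ω, Z ω ^ 2 ∂P = 1 :=
    (hZlaw.integral_comp (f := fun z => z ^ 2) (by fun_prop)).trans
      integral_sq_gaussianReal_zero_one
  rw [← cExp_comp_of_hasLaw hYlaw hS (g := fun y => y ^ 2) (by fun_prop)]
  exact cCorr_add_of_indepFun hind hY hZ (memLp_of_hasLaw_gaussianReal hYlaw ENNReal.ofNat_ne_top)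
    (memLp_of_hasLaw_gaussianReal hZlaw ENNReal.ofNat_ne_top)
    (hZlaw.integral_eq.trans integral_id_gaussianReal) hZsq hS hA hYmean a b

theorem stmt6 {Ω : Type*} [MeasurableSpace Ω] (P : Measure Ω) [IsProbabilityMeasure P]
    (Y Z : Ω → ℝ) (hY : Measurable Y) (hZ : Measurable Z)
    (hYlaw : Measure.map Y P = gaussianReal 0 1) (hZlaw : Measure.map Z P = gaussianReal 0 1)
    (hind : IndepFun Y Z P)
    (ρ : ℝ) (hρ : ρ ∈ Set.Ioo (0 : ℝ) 1)
    (X : Ω → ℝ) (hX : X = fun ω => ρ * Y ω + Real.sqrt (1 - ρ ^ 2) * Z ω) :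
    Tendsto (fun v : ℝ => cCorr P {ω | |Y ω| > v} X Y) atTop (nhds 1) ∧
      Tendsto (fun v : ℝ => v ^ 2 * (1 - cCorr P {ω | |Y ω| > v} X Y)) atTop
        (nhds ((1 - ρ ^ 2) / (2 * ρ ^ 2))) := by
  obtain ⟨hρ0, hρ1⟩ := hρ
  have hcorr : ∀ᶠ v in atTop, mixtureCorr ρ √(1 - ρ ^ 2)
      (cExp (gaussianReal 0 1) {y | |y| > v} fun y => y ^ 2) = cCorr P {ω | |Y ω| > v} X Y := by
    filter_upwards [eventually_gt_atTop 0] with v hv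
    rw [hX, cCorr_abs_gt_eq_mixtureCorr hY hZ ⟨hY.aemeasurable, hYlaw⟩ ⟨hZ.aemeasurable, hZlaw⟩
      hind _ _ hv]
  obtain ⟨hlim, hrate⟩ := tendsto_mixtureCorr (b := √(1 - ρ ^ 2)) hρ0
    tendsto_cExp_gaussianReal_sq_abs_gt_div_sq
  rw [sq_sqrt (by nlinarith)] at hrate
  exact ⟨hlim.congr' hcorr, hrate.congr' (hcorr.mono fun v hv => by rw [hv])⟩
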